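/- arXiv:1409.3959 — 4 statements merged into one kernel-verified Lean document; each statement's English description precedes it below -/
import Mathlib

section
/- Let P and P̂ be n×r real basis matrices and set ζ* := ‖(I − P̂ P̂ᵀ) P‖₂. Then for every s, κ_s(P̂)² ≤ κ_s(P)² + 2 ζ*. -/
/-!
Conjugating by the row selection `I_Tᵀ`, a contraction, gives
`‖I_Tᵀ P̂‖² = ‖I_Tᵀ P̂P̂ᵀ I_T‖ ≤ ‖I_Tᵀ P‖² + ‖P̂P̂ᵀ − PPᵀ‖`, so it suffices to bound the distance of the
two orthogonal projections by `2ζ*`. In `P̂P̂ᵀ − PPᵀ = P̂P̂ᵀ(I − PPᵀ) − (I − P̂P̂ᵀ)PPᵀ` the second term has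
norm at most `ζ*`, and the first at most `‖(I − PPᵀ)P̂‖ = ζ*`: the squares of both norms are
`1 − σ_min(PᵀP̂)²`, and a square matrix and its transpose have the same smallest singular value.
-/

open Matrix

/-- Spectral norm (largest singular value) of a real matrix. -/
noncomputable def specNorm {m n : Type*} [Fintype m] [Fintype n] [DecidableEq n]
    (A : Matrix m n ℝ) : ℝ :=
  ‖LinearMap.toContinuousLinearMap (Matrix.toEuclideanLin A)‖

/-- Denseness coefficient `κ_s(P) = max_{|T| ≤ s} ‖I_Tᵀ P‖₂`. -/
noncomputable def kappa {n : ℕ} {r : Type*} [Fintype r] [DecidableEq r]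
    (s : ℕ) (P : Matrix (Fin n) r ℝ) : ℝ :=
  ⨆ T : {T : Finset (Fin n) // T.card ≤ s},
    specNorm (P.submatrix (fun i : {i // i ∈ T.1} => i.1) id)

open ContinuousLinearMap
open scoped RealInnerProductSpace

section Hilbert

variable {E F G : Type*}
  [NormedAddCommGroup E] [InnerProductSpace ℝ E] [CompleteSpace E]
  [NormedAddCommGroup F] [InnerProductSpace ℝ F] [CompleteSpace F]
  [NormedAddCommGroup G] [InnerProductSpace ℝ G] [CompleteSpace G]

theorem norm_le_one_of_adjoint_comp_self {p : F →L[ℝ] E} (hp : adjoint p ∘L p = 1) :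
    ‖p‖ ≤ 1 :=
  opNorm_le_bound _ zero_le_one fun x => by
    rw [(norm_map_iff_adjoint_comp_self p).2 hp x, one_mul]

theorem norm_one_sub_proj_comp_apply_sq {p q : F →L[ℝ] E} (hp : adjoint p ∘L p = 1)
    (hq : adjoint q ∘L q = 1) (y : F) :
    ‖((1 - q ∘L adjoint q) ∘L p) y‖ ^ 2 = ‖y‖ ^ 2 - ‖(adjoint q ∘L p) y‖ ^ 2 := by
  have hnorm : ‖q (adjoint q (p y))‖ = ‖adjoint q (p y)‖ :=
    (norm_map_iff_adjoint_comp_self q).2 hq _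
  have hinner : ⟪p y, q (adjoint q (p y))⟫ = ‖adjoint q (p y)‖ ^ 2 := by
    rw [← adjoint_inner_left, real_inner_self_eq_norm_sq]
  simp only [ContinuousLinearMap.comp_apply, _root_.sub_apply, one_apply_eq_self]
  rw [norm_sub_sq_real, hnorm, hinner, (norm_map_iff_adjoint_comp_self p).2 hp y]
  ring

theorem norm_comp_sq_le_norm_comp_sq_add (a : E →L[ℝ] G) (p q : F →L[ℝ] E) :
    ‖a ∘L q‖ ^ 2 ≤ ‖a ∘L p‖ ^ 2 + ‖a‖ ^ 2 * ‖q ∘L adjoint q - p ∘L adjoint p‖ := by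
  have hC : ∀ T : F →L[ℝ] G, ‖T‖ ^ 2 = ‖T ∘L adjoint T‖ := fun T => by
    simpa [sq] using (norm_adjoint_comp_self (adjoint T)).symm
  have hsplit : (a ∘L q) ∘L adjoint (a ∘L q)
      = a ∘L (q ∘L adjoint q - p ∘L adjoint p) ∘L adjoint a + (a ∘L p) ∘L adjoint (a ∘L p) := by
    ext x
    simp [adjoint_comp]
  calc ‖a ∘L q‖ ^ 2
      = ‖a ∘L (q ∘L adjoint q - p ∘L adjoint p) ∘L adjoint a + (a ∘L p) ∘L adjoint (a ∘L p)‖ := by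
        rw [hC, hsplit]
    _ ≤ ‖a‖ * (‖q ∘L adjoint q - p ∘L adjoint p‖ * ‖adjoint a‖) + ‖a ∘L p‖ ^ 2 := by
        rw [hC (a ∘L p)]
        refine (norm_add_le _ _).trans (add_le_add_left ?_ _)
        exact (opNorm_comp_le _ _).trans (by gcongr; exact opNorm_comp_le _ _)
    _ = ‖a ∘L p‖ ^ 2 + ‖a‖ ^ 2 * ‖q ∘L adjoint q - p ∘L adjoint p‖ := by
        rw [LinearIsometryEquiv.norm_map]
        ring

theorem mul_norm_sq_le_norm_apply_sq_of_adjoint [FiniteDimensional ℝ F] (b : F →L[ℝ] F) {K : ℝ}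
    (h : ∀ y, K * ‖y‖ ^ 2 ≤ ‖adjoint b y‖ ^ 2) (x : F) : K * ‖x‖ ^ 2 ≤ ‖b x‖ ^ 2 := by
  rcases le_or_gt K 0 with hK | hK
  · exact (mul_nonpos_of_nonpos_of_nonneg hK (sq_nonneg _)).trans (sq_nonneg _)
  have hinj : Function.Injective (adjoint b : F →ₗ[ℝ] F) := by
    refine (injective_iff_map_eq_zero _).2 fun y hy => ?_
    have : K * ‖y‖ ^ 2 ≤ 0 := by simpa [show adjoint b y = 0 from hy] using h y
    simpa using nonpos_of_mul_nonpos_right this hK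
  obtain ⟨y, rfl⟩ := LinearMap.injective_iff_surjective.1 hinj x
  change K * ‖adjoint b y‖ ^ 2 ≤ ‖b (adjoint b y)‖ ^ 2
  have hKy : K * ‖y‖ ^ 2 ≤ ‖adjoint b y‖ ^ 2 := h y
  have hcs : ‖adjoint b y‖ ^ 2 ≤ ‖y‖ * ‖b (adjoint b y)‖ := by
    rw [← real_inner_self_eq_norm_sq, adjoint_inner_left]
    exact real_inner_le_norm _ _
  rcases (sq_nonneg ‖adjoint b y‖).eq_or_lt with hzero | hpos
  · rw [← hzero, mul_zero]
    exact sq_nonneg _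
  refine le_of_mul_le_mul_right ?_ hpos
  calc K * ‖adjoint b y‖ ^ 2 * ‖adjoint b y‖ ^ 2
      ≤ K * (‖y‖ * ‖b (adjoint b y)‖) ^ 2 := by
        rw [mul_assoc, ← sq]
        gcongr
    _ ≤ ‖adjoint b y‖ ^ 2 * ‖b (adjoint b y)‖ ^ 2 := by
        rw [mul_pow, ← mul_assoc]
        gcongr
    _ = ‖b (adjoint b y)‖ ^ 2 * ‖adjoint b y‖ ^ 2 := mul_comm _ _

theorem norm_one_sub_proj_comp_le_swap [FiniteDimensional ℝ F] {p q : F →L[ℝ] E}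
    (hp : adjoint p ∘L p = 1) (hq : adjoint q ∘L q = 1) :
    ‖(1 - p ∘L adjoint p) ∘L q‖ ≤ ‖(1 - q ∘L adjoint q) ∘L p‖ := by
  set ζ := ‖(1 - q ∘L adjoint q) ∘L p‖
  have hcos := mul_norm_sq_le_norm_apply_sq_of_adjoint (adjoint p ∘L q) (K := 1 - ζ ^ 2)
    fun y => by
      have := pow_le_pow_left₀ (norm_nonneg _) (((1 - q ∘L adjoint q) ∘L p).le_opNorm y) 2
      rw [adjoint_comp, adjoint_adjoint, norm_one_sub_proj_comp_apply_sq hp hq] at *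
      linarith
  refine opNorm_le_bound _ (norm_nonneg _) fun x => ?_
  refine pow_le_pow_iff_left₀ (norm_nonneg _) (by positivity) two_ne_zero |>.1 ?_
  rw [norm_one_sub_proj_comp_apply_sq hq hp, mul_pow]
  linarith [hcos x]

theorem norm_proj_sub_proj_le [FiniteDimensional ℝ F] {p q : F →L[ℝ] E}
    (hp : adjoint p ∘L p = 1) (hq : adjoint q ∘L q = 1) :
    ‖q ∘L adjoint q - p ∘L adjoint p‖ ≤ 2 * ‖(1 - q ∘L adjoint q) ∘L p‖ := by
  have hsplit : q ∘L adjoint q - p ∘L adjoint p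
      = adjoint (((1 - p ∘L adjoint p) ∘L q) ∘L adjoint q)
        - ((1 - q ∘L adjoint q) ∘L p) ∘L adjoint p := by
    ext x
    simp [adjoint_comp, adjoint_one]
  have hpq := norm_one_sub_proj_comp_le_swap hp hq
  have hp₁ : ‖adjoint p‖ ≤ 1 := by
    rw [LinearIsometryEquiv.norm_map]; exact norm_le_one_of_adjoint_comp_self hp
  have hq₁ : ‖adjoint q‖ ≤ 1 := by
    rw [LinearIsometryEquiv.norm_map]; exact norm_le_one_of_adjoint_comp_self hq
  rw [hsplit, two_mul]
  refine (norm_sub_le _ _).trans (add_le_add ?_ ?_)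
  · rw [LinearIsometryEquiv.norm_map]
    exact (opNorm_comp_le _ _).trans <| (mul_le_of_le_one_right (norm_nonneg _) hq₁).trans hpq
  · exact (opNorm_comp_le _ _).trans <| mul_le_of_le_one_right (norm_nonneg _) hp₁

end Hilbert

section Matrices

variable {ι κ μ : Type*} [Fintype ι] [Fintype κ] [Fintype μ]

noncomputable def euclideanCLM [DecidableEq κ] :
    Matrix ι κ ℝ ≃ₗ[ℝ] (EuclideanSpace ℝ κ →L[ℝ] EuclideanSpace ℝ ι) :=
  toEuclideanLin.trans LinearMap.toContinuousLinearMap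

theorem specNorm_eq_norm_euclideanCLM [DecidableEq κ] (A : Matrix ι κ ℝ) :
    specNorm A = ‖euclideanCLM A‖ :=
  rfl

theorem specNorm_nonneg [DecidableEq κ] (A : Matrix ι κ ℝ) : 0 ≤ specNorm A :=
  norm_nonneg _

theorem euclideanCLM_mul [DecidableEq ι] [DecidableEq κ] (A : Matrix μ ι ℝ) (B : Matrix ι κ ℝ) :
    euclideanCLM (A * B) = euclideanCLM A ∘L euclideanCLM B := by
  ext x
  simp [euclideanCLM, mulVec_mulVec]

theorem euclideanCLM_one [DecidableEq ι] : euclideanCLM (1 : Matrix ι ι ℝ) = 1 := by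
  ext x
  simp [euclideanCLM]

theorem euclideanCLM_transpose [DecidableEq ι] [DecidableEq κ] (A : Matrix ι κ ℝ) :
    euclideanCLM Aᵀ = adjoint (euclideanCLM A) := by
  simp only [euclideanCLM, LinearEquiv.trans_apply]
  rw [← LinearMap.adjoint_toContinuousLinearMap, ← toEuclideanLin_conjTranspose_eq_adjoint,
    conjTranspose_eq_transpose_of_trivial]

theorem adjoint_euclideanCLM_comp_self [DecidableEq ι] [DecidableEq κ] {P : Matrix ι κ ℝ}
    (hP : Pᵀ * P = 1) : adjoint (euclideanCLM P) ∘L euclideanCLM P = 1 := by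
  rw [← euclideanCLM_transpose, ← euclideanCLM_mul, hP, euclideanCLM_one]

theorem specNorm_mul_sq_le [DecidableEq ι] [DecidableEq κ] (A : Matrix μ ι ℝ)
    {P Q : Matrix ι κ ℝ} (hP : Pᵀ * P = 1) (hQ : Qᵀ * Q = 1) :
    specNorm (A * Q) ^ 2
      ≤ specNorm (A * P) ^ 2 + specNorm A ^ 2 * (2 * specNorm ((1 - Q * Qᵀ) * P)) := by
  simp only [specNorm_eq_norm_euclideanCLM, euclideanCLM_mul, map_sub, euclideanCLM_one,
    euclideanCLM_transpose]
  refine (norm_comp_sq_le_norm_comp_sq_add _ (euclideanCLM P) _).trans ?_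
  gcongr
  exact norm_proj_sub_proj_le (adjoint_euclideanCLM_comp_self hP)
    (adjoint_euclideanCLM_comp_self hQ)

end Matrices

theorem submatrix_id_eq_one_submatrix_mul {ι κ μ : Type*} [Fintype ι] [DecidableEq ι]
    (f : μ → ι) (M : Matrix ι κ ℝ) :
    M.submatrix f id = (1 : Matrix ι ι ℝ).submatrix f id * M := by
  simpa using (one_submatrix_mul f (Equiv.refl ι) M).symm

theorem specNorm_one_submatrix_le_one {ι μ : Type*} [Fintype ι] [Fintype μ] [DecidableEq ι]
    [DecidableEq μ] {f : μ → ι} (hf : Function.Injective f) :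
    specNorm ((1 : Matrix ι ι ℝ).submatrix f id) ≤ 1 := by
  have hS : ((1 : Matrix ι ι ℝ).submatrix f id)ᵀᵀ * ((1 : Matrix ι ι ℝ).submatrix f id)ᵀ = 1 := by
    rw [transpose_transpose, transpose_submatrix, transpose_one,
      ← submatrix_mul _ _ _ _ _ Function.bijective_id, one_mul, submatrix_one _ hf]
  rw [specNorm_eq_norm_euclideanCLM, ← LinearIsometryEquiv.norm_map adjoint,
    ← euclideanCLM_transpose]
  exact norm_le_one_of_adjoint_comp_self (adjoint_euclideanCLM_comp_self hS)

theorem ciSup_sq_le_ciSup_sq_add {ι : Type*} [Finite ι] [Nonempty ι] {f g : ι → ℝ} {c : ℝ}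
    (hg : ∀ i, 0 ≤ g i) (h : ∀ i, f i ^ 2 ≤ g i ^ 2 + c) :
    (⨆ i, f i) ^ 2 ≤ (⨆ i, g i) ^ 2 + c := by
  obtain ⟨i, hi⟩ := exists_eq_ciSup_of_finite (f := f)
  rw [← hi]
  refine (h i).trans ?_
  gcongr
  · exact hg i
  · exact le_ciSup (Set.finite_range g).bddAbove i

/-- For basis matrices `P, P̂` with `ζ* = ‖(I − P̂P̂ᵀ)P‖₂`:
`κ_s(P̂)² ≤ κ_s(P)² + 2ζ*`. -/
theorem stmt7 {n r : ℕ} (s : ℕ) (P Phat : Matrix (Fin n) (Fin r) ℝ)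
    (hP : Pᵀ * P = 1) (hPhat : Phatᵀ * Phat = 1)
    (ζs : ℝ) (hζ : ζs = specNorm ((1 - Phat * Phatᵀ) * P)) :
    kappa s Phat ^ 2 ≤ kappa s P ^ 2 + 2 * ζs := by
  have : Nonempty {T : Finset (Fin n) // T.card ≤ s} := ⟨⟨∅, by simp⟩⟩
  refine ciSup_sq_le_ciSup_sq_add (fun _ => specNorm_nonneg _) fun T => ?_
  have hsel := specNorm_one_submatrix_le_one (ι := Fin n) Subtype.val_injective (μ := T.1)
  rw [submatrix_id_eq_one_submatrix_mul _ Phat, submatrix_id_eq_one_submatrix_mul _ P, hζ]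
  have hζ₀ := specNorm_nonneg ((1 - Phat * Phatᵀ) * P)
  exact (specNorm_mul_sq_le _ hP hPhat).trans <| add_le_add le_rfl <|
    mul_le_of_le_one_left (by positivity) (pow_le_one₀ (specNorm_nonneg _) hsel)
end

section
/- Let P̂* be an n×r real basis matrix and P̂_new an n×c real basis matrix with P̂*ᵀ P̂_new = 0. Then for every s, the restricted isometry constant satisfies δ_s(I − P̂* P̂*ᵀ − P̂_new P̂_newᵀ) ≤ κ_s(P̂*)² + κ_s(P̂_new)². -/
open Matrix

/-- Restricted isometry constant `δ_s(A)`: the smallest `δ ≥ 0` such that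
`(1−δ)‖x‖² ≤ ‖Ax‖² ≤ (1+δ)‖x‖²` for every `s`-sparse `x`. -/
noncomputable def RIC {m n : ℕ} (s : ℕ) (A : Matrix (Fin m) (Fin n) ℝ) : ℝ :=
  sInf {δ : ℝ | 0 ≤ δ ∧ ∀ x : Fin n → ℝ,
    (Finset.univ.filter fun i => x i ≠ 0).card ≤ s →
      (1 - δ) * ∑ i, x i ^ 2 ≤ ∑ j, (A.mulVec x j) ^ 2 ∧
      ∑ j, (A.mulVec x j) ^ 2 ≤ (1 + δ) * ∑ i, x i ^ 2}

section Aux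

variable {m' n' : Type*} [Fintype m'] [Fintype n'] [DecidableEq n']

lemma sq_norm_equiv_symm (v : m' → ℝ) :
    ‖(WithLp.equiv 2 (m' → ℝ)).symm v‖ ^ 2 = ∑ j, v j ^ 2 := by
  rw [EuclideanSpace.norm_eq, Real.sq_sqrt (by positivity)]
  simp [Real.norm_eq_abs, sq_abs]

lemma sum_sq_mulVec_le (A : Matrix m' n' ℝ) (x : n' → ℝ) :
    ∑ j, (A.mulVec x j) ^ 2 ≤ specNorm A ^ 2 * ∑ i, x i ^ 2 := by
  have h := (LinearMap.toContinuousLinearMap (Matrix.toEuclideanLin A)).le_opNorm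
    ((WithLp.equiv 2 (n' → ℝ)).symm x)
  have happ : (LinearMap.toContinuousLinearMap (Matrix.toEuclideanLin A))
      ((WithLp.equiv 2 (n' → ℝ)).symm x) = (WithLp.equiv 2 (m' → ℝ)).symm (A *ᵥ x) := rfl
  rw [happ] at h
  calc ∑ j, (A.mulVec x j) ^ 2
      = ‖(WithLp.equiv 2 (m' → ℝ)).symm (A *ᵥ x)‖ ^ 2 := (sq_norm_equiv_symm _).symm
    _ ≤ (specNorm A * ‖(WithLp.equiv 2 (n' → ℝ)).symm x‖) ^ 2 :=
        pow_le_pow_left₀ (norm_nonneg _) h 2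
    _ = specNorm A ^ 2 * ∑ i, x i ^ 2 := by rw [mul_pow, sq_norm_equiv_symm]

lemma specNorm_transpose [DecidableEq m'] (A : Matrix m' n' ℝ) :
    specNorm Aᵀ = specNorm A := by
  have hct : (Aᵀ : Matrix n' m' ℝ) = Aᴴ := by
    ext i j; simp [conjTranspose_apply]
  rw [hct, specNorm, specNorm, Matrix.toEuclideanLin_conjTranspose_eq_adjoint,
    LinearMap.adjoint_toContinuousLinearMap]
  exact (ContinuousLinearMap.adjoint :
    (EuclideanSpace ℝ n' →L[ℝ] EuclideanSpace ℝ m') ≃ₗᵢ⋆[ℝ] _).norm_map _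

lemma specNorm_le_kappa {n : ℕ} {r : Type*} [Fintype r] [DecidableEq r]
    (s : ℕ) (P : Matrix (Fin n) r ℝ) (T : Finset (Fin n)) (hT : T.card ≤ s) :
    specNorm (P.submatrix (fun i : {i // i ∈ T} => i.1) id) ≤ kappa s P :=
  le_ciSup (f := fun T : {T : Finset (Fin n) // T.card ≤ s} =>
      specNorm (P.submatrix (fun i : {i // i ∈ T.1} => i.1) id))
    (Set.Finite.bddAbove (Set.finite_range _))
    (⟨T, hT⟩ : {T : Finset (Fin n) // T.card ≤ s})

lemma sparse_bound {n : ℕ} {r : Type*} [Fintype r] [DecidableEq r]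
    (s : ℕ) (P : Matrix (Fin n) r ℝ) (x : Fin n → ℝ)
    (hx : (Finset.univ.filter fun i => x i ≠ 0).card ≤ s) :
    ∑ k, (Pᵀ.mulVec x k) ^ 2 ≤ kappa s P ^ 2 * ∑ i, x i ^ 2 := by
  classical
  set T : Finset (Fin n) := Finset.univ.filter fun i => x i ≠ 0 with hTdef
  set M : Matrix {i // i ∈ T} r ℝ := P.submatrix (fun i : {i // i ∈ T} => i.1) id with hM
  set y : {i // i ∈ T} → ℝ := fun i => x i.1 with hy
  have hrestrict : ∀ f : Fin n → ℝ, (∀ i, x i = 0 → f i = 0) →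
      ∑ i, f i = ∑ i : {i // i ∈ T}, f i.1 := by
    intro f hf
    rw [Finset.sum_coe_sort T fun i => f i]
    refine (Finset.sum_subset (Finset.subset_univ T) fun i _ hiT => ?_).symm
    have : x i = 0 := by
      by_contra h
      exact hiT (Finset.mem_filter.2 ⟨Finset.mem_univ i, h⟩)
    exact hf i this
  have hmv : Pᵀ.mulVec x = Mᵀ.mulVec y := by
    funext k
    simp only [mulVec, dotProduct, transpose_apply, hM, submatrix_apply, id_eq, hy]
    exact hrestrict (fun i => P i k * x i) (fun i h => by simp [h])
  have hsum : ∑ i, x i ^ 2 = ∑ i, y i ^ 2 :=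
    hrestrict (fun i => x i ^ 2) (fun i h => by simp [h])
  rw [hmv, hsum]
  calc ∑ k, (Mᵀ.mulVec y k) ^ 2 ≤ specNorm Mᵀ ^ 2 * ∑ i, y i ^ 2 := sum_sq_mulVec_le _ _
    _ = specNorm M ^ 2 * ∑ i, y i ^ 2 := by rw [specNorm_transpose]
    _ ≤ kappa s P ^ 2 * ∑ i, y i ^ 2 := by
        apply mul_le_mul_of_nonneg_right _ (by positivity)
        exact pow_le_pow_left₀ (norm_nonneg _) (specNorm_le_kappa s P T hx) 2

end Aux

/-- For orthogonal basis matrices `P̂*` and `P̂_new`: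
`δ_s(I − P̂*P̂*ᵀ − P̂_newP̂_newᵀ) ≤ κ_s(P̂*)² + κ_s(P̂_new)²`. -/
theorem stmt9 {n r c : ℕ} (s : ℕ)
    (Phats : Matrix (Fin n) (Fin r) ℝ) (Phatnew : Matrix (Fin n) (Fin c) ℝ)
    (hPhats : Phatsᵀ * Phats = 1) (hPhatnew : Phatnewᵀ * Phatnew = 1)
    (horth : Phatsᵀ * Phatnew = 0) :
    RIC s (1 - Phats * Phatsᵀ - Phatnew * Phatnewᵀ) ≤
      kappa s Phats ^ 2 + kappa s Phatnew ^ 2 := by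
  set A : Matrix (Fin n) (Fin n) ℝ := 1 - Phats * Phatsᵀ - Phatnew * Phatnewᵀ with hA
  set δ : ℝ := kappa s Phats ^ 2 + kappa s Phatnew ^ 2 with hδ
  have hδ0 : 0 ≤ δ := add_nonneg (sq_nonneg _) (sq_nonneg _)
  have horth' : Phatnewᵀ * Phats = 0 := by
    have := congrArg Matrix.transpose horth
    simpa using this
  -- A is symmetric idempotent
  have hAt : Aᵀ = A := by
    rw [hA]; simp [transpose_sub, transpose_mul, Matrix.mul_assoc]
  have hPp : (Phats * Phatsᵀ) * (Phats * Phatsᵀ) = Phats * Phatsᵀ := by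
    rw [Matrix.mul_assoc, ← Matrix.mul_assoc Phatsᵀ, hPhats, Matrix.one_mul]
  have hQq : (Phatnew * Phatnewᵀ) * (Phatnew * Phatnewᵀ) = Phatnew * Phatnewᵀ := by
    rw [Matrix.mul_assoc, ← Matrix.mul_assoc Phatnewᵀ, hPhatnew, Matrix.one_mul]
  have hPQ : (Phats * Phatsᵀ) * (Phatnew * Phatnewᵀ) = 0 := by
    rw [Matrix.mul_assoc, ← Matrix.mul_assoc Phatsᵀ, horth, Matrix.zero_mul, Matrix.mul_zero]
  have hQP : (Phatnew * Phatnewᵀ) * (Phats * Phatsᵀ) = 0 := by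
    rw [Matrix.mul_assoc, ← Matrix.mul_assoc Phatnewᵀ, horth', Matrix.zero_mul, Matrix.mul_zero]
  have hAsq : A * A = A := by
    rw [hA]
    simp only [sub_mul, mul_sub, Matrix.one_mul, Matrix.mul_one, hPp, hQq, hPQ, hQP]
    abel
  apply csInf_le ⟨0, fun t ht => ht.1⟩
  refine ⟨hδ0, fun x hx => ?_⟩
  have hdot : ∀ {k : ℕ} (v : Fin k → ℝ), v ⬝ᵥ v = ∑ j, v j ^ 2 := by
    intro k v; simp [dotProduct, sq]
  -- key identity
  have hvm : (A *ᵥ x) ᵥ* A = A *ᵥ x := by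
    calc (A *ᵥ x) ᵥ* A = (A *ᵥ x) ᵥ* Aᵀᵀ := by rw [transpose_transpose]
      _ = Aᵀ *ᵥ (A *ᵥ x) := Matrix.vecMul_transpose _ _
      _ = (Aᵀ * A) *ᵥ x := Matrix.mulVec_mulVec _ _ _
      _ = A *ᵥ x := by rw [hAt, hAsq]
  have hself : (A *ᵥ x) ⬝ᵥ (A *ᵥ x) = x ⬝ᵥ (A *ᵥ x) := by
    rw [Matrix.dotProduct_mulVec, hvm, dotProduct_comm]
  have hPdot : x ⬝ᵥ ((Phats * Phatsᵀ) *ᵥ x) = (Phatsᵀ *ᵥ x) ⬝ᵥ (Phatsᵀ *ᵥ x) := by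
    rw [← Matrix.mulVec_mulVec, Matrix.dotProduct_mulVec]
    congr 1
    calc x ᵥ* Phats = x ᵥ* Phatsᵀᵀ := by rw [transpose_transpose]
      _ = Phatsᵀ *ᵥ x := Matrix.vecMul_transpose _ _
  have hQdot : x ⬝ᵥ ((Phatnew * Phatnewᵀ) *ᵥ x) = (Phatnewᵀ *ᵥ x) ⬝ᵥ (Phatnewᵀ *ᵥ x) := by
    rw [← Matrix.mulVec_mulVec, Matrix.dotProduct_mulVec]
    congr 1
    calc x ᵥ* Phatnew = x ᵥ* Phatnewᵀᵀ := by rw [transpose_transpose]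
      _ = Phatnewᵀ *ᵥ x := Matrix.vecMul_transpose _ _
  have key : ∑ j, (A.mulVec x j) ^ 2 =
      ∑ i, x i ^ 2 - ∑ k, (Phatsᵀ.mulVec x k) ^ 2 - ∑ k, (Phatnewᵀ.mulVec x k) ^ 2 := by
    rw [← hdot (A.mulVec x), hself, hA]
    rw [Matrix.sub_mulVec, Matrix.sub_mulVec, Matrix.one_mulVec,
      dotProduct_sub, dotProduct_sub, hPdot, hQdot, hdot, hdot, hdot]
  have hp := sparse_bound s Phats x hx
  have hq := sparse_bound s Phatnew x hx
  have hS : (0:ℝ) ≤ ∑ i, x i ^ 2 := Finset.sum_nonneg fun i _ => sq_nonneg _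
  have hp0 : (0:ℝ) ≤ ∑ k, (Phatsᵀ.mulVec x k) ^ 2 := Finset.sum_nonneg fun i _ => sq_nonneg _
  have hq0 : (0:ℝ) ≤ ∑ k, (Phatnewᵀ.mulVec x k) ^ 2 := Finset.sum_nonneg fun i _ => sq_nonneg _
  constructor
  · rw [key]; nlinarith [hp, hq]
  · rw [key]; nlinarith
end

section
/- Let 0 < c < n. Let E (n×c) and E_⊥ (n×(n−c)) be real matrices such that the concatenation [E E_⊥] is an orthogonal matrix. Let A₁ (c×c) and A₂ ((n−c)×(n−c)) be real symmetric matrices and set A := E A₁ Eᵀ + E_⊥ A₂ E_⊥ᵀ. Let H be an n×n real symmetric matrix and suppose A + H = F Λ Fᵀ + F_⊥ Λ_⊥ F_⊥ᵀ, where [F F_⊥] is an orthogonal matrix with F of size n×c, Λ (c×c) and Λ_⊥ ((n−c)×(n−c)) are diagonal, and every diagonal entry of Λ is greater than or equal to every diagonal entry of Λ_⊥ (i.e., the columns of F are eigenvectors of A+H corresponding to its c largest eigenvalues). If λ_min(A₁) − ‖A₂‖₂ − ‖H‖₂ > 0, then ‖(I − F Fᵀ) E‖₂ ≤ ‖H‖₂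 / (λ_min(A₁) − ‖A₂‖₂ − ‖H‖₂). -/
open Matrix

/-- Smallest eigenvalue of a (symmetric) real matrix, as the infimum of the
Rayleigh quotient over unit vectors. -/
noncomputable def lambdaMin {m : Type*} [Fintype m] (A : Matrix m m ℝ) : ℝ :=
  ⨅ x : {x : m → ℝ // ∑ i, x i ^ 2 = 1}, ∑ i, x.1 i * A.mulVec x.1 i

/-!
Put `S := F⊥ᵀ E`. Since `I - F Fᵀ = F⊥ F⊥ᵀ` and `F⊥` has orthonormal columns,
`‖(I - F Fᵀ) E‖ = ‖S‖`. Multiplying `A + H = F Λ Fᵀ + F⊥ Λ⊥ F⊥ᵀ` by `F⊥ᵀ` on the left and `E`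
on the right, and using `A E = E A₁`, gives the Sylvester equation `S A₁ - Λ⊥ S = -F⊥ᵀ H E`.
Testing it against a top singular pair `(S x, x)` of `S` gives
`(λ_min(A₁) - max Λ⊥) ‖S‖ ≤ ‖F⊥ᵀ H E‖ ≤ ‖H‖`.
It remains to see `max Λ⊥ ≤ ‖A₂‖ + ‖H‖` (Weyl): by a dimension count some nonzero `x` in the range
of `E⊥` has `F⊥ᵀ x` supported on a single coordinate `j`; the quadratic form of `A + H` at `x` is at
least `Λ⊥ⱼ ‖x‖²` by the ordering of the eigenvalues, and at most `(‖A₂‖ + ‖H‖) ‖x‖²` because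
`A E⊥ = E⊥ A₂`.
-/

theorem ContinuousLinearMap.exists_norm_eq_one_adjoint_comp_self_apply_eq
    {E F : Type*} [NormedAddCommGroup E] [InnerProductSpace ℝ E] [FiniteDimensional ℝ E]
    [Nontrivial E] [NormedAddCommGroup F] [InnerProductSpace ℝ F] [CompleteSpace F]
    (S : E →L[ℝ] F) :
    ∃ x, ‖x‖ = 1 ∧ (ContinuousLinearMap.adjoint S ∘L S) x = ‖S‖ ^ 2 • x := by
  obtain ⟨x, hx, hSx⟩ : ∃ x ∈ Metric.sphere (0 : E) 1, ‖S x‖ = ‖S‖ := by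
    rw [← S.sSup_sphere_eq_norm]
    exact (isCompact_sphere 0 1).image S.continuous.norm |>.sSup_mem <|
      (NormedSpace.sphere_nonempty.2 zero_le_one).image _
  rw [mem_sphere_zero_iff_norm] at hx
  set T := ContinuousLinearMap.adjoint S ∘L S
  have hT : IsSelfAdjoint T := by
    simp only [T, IsSelfAdjoint, ContinuousLinearMap.star_eq_adjoint,
      ContinuousLinearMap.adjoint_comp, ContinuousLinearMap.adjoint_adjoint]
  have hTre : ∀ y, T.reApplyInnerSelf y = ‖S y‖ ^ 2 := fun y => by
    rw [ContinuousLinearMap.reApplyInnerSelf_apply, RCLike.re_to_real,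
      ContinuousLinearMap.comp_apply, ContinuousLinearMap.adjoint_inner_left,
      real_inner_self_eq_norm_sq]
  have hmax : IsMaxOn T.reApplyInnerSelf (Metric.sphere 0 ‖x‖) x := fun y hy => by
    rw [hx, mem_sphere_zero_iff_norm] at hy
    simp only [hTre, hSx]
    exact pow_le_pow_left₀ (norm_nonneg _) (by simpa [hy] using S.le_opNorm y) 2
  refine ⟨x, hx, ?_⟩
  rw [hT.eq_smul_self_of_isLocalExtrOn (Or.inr hmax.localize), ContinuousLinearMap.rayleighQuotient,
    hTre, hx, hSx]
  simp

namespace Matrix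

open WithLp

theorem transpose_fromCols_mul_fromCols_eq_one_iff {l m n : Type*} [Fintype l] [DecidableEq m]
    [DecidableEq n] {U : Matrix l m ℝ} {V : Matrix l n ℝ} :
    (fromCols U V)ᵀ * fromCols U V = 1 ↔ Uᵀ * U = 1 ∧ Uᵀ * V = 0 ∧ Vᵀ * U = 0 ∧ Vᵀ * V = 1 := by
  rw [transpose_fromCols, fromRows_mul_fromCols, ← fromBlocks_one, fromBlocks_inj]

variable {m n l : Type*} [Fintype m] [Fintype n] [Fintype l]

theorem mulVec_dotProduct_mulVec (U : Matrix m n ℝ) (x y : n → ℝ) :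
    (U *ᵥ x) ⬝ᵥ (U *ᵥ y) = x ⬝ᵥ Uᵀ *ᵥ U *ᵥ y := by
  rw [dotProduct_comm, ← dotProduct_transpose_mulVec]

theorem mulVec_dotProduct_mulVec_of_transpose_mul_self_eq_one [DecidableEq n]
    {U : Matrix m n ℝ} (hU : Uᵀ * U = 1) (x y : n → ℝ) :
    (U *ᵥ x) ⬝ᵥ (U *ᵥ y) = x ⬝ᵥ y := by
  rw [mulVec_dotProduct_mulVec, mulVec_mulVec, hU, one_mulVec]

theorem dotProduct_mul_mul_transpose_mulVec (U : Matrix m n ℝ) (X : Matrix n n ℝ) (x : m → ℝ) :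
    x ⬝ᵥ (U * X * Uᵀ) *ᵥ x = (Uᵀ *ᵥ x) ⬝ᵥ X *ᵥ (Uᵀ *ᵥ x) := by
  rw [← mulVec_mulVec, ← mulVec_mulVec, dotProduct_mulVec, ← mulVec_transpose]

theorem le_dotProduct_diagonal_mulVec {d w : n → ℝ} {β : ℝ} [DecidableEq n]
    (h : ∀ i, w i ≠ 0 → β ≤ d i) : β * (w ⬝ᵥ w) ≤ w ⬝ᵥ diagonal d *ᵥ w := by
  simp only [dotProduct, mulVec_diagonal, Finset.mul_sum]
  refine Finset.sum_le_sum fun i _ => ?_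
  rcases eq_or_ne (w i) 0 with hi | hi
  · simp [hi]
  · nlinarith [h i hi, mul_self_nonneg (w i)]

theorem dotProduct_diagonal_mulVec_le {d : n → ℝ} {β : ℝ} [DecidableEq n]
    (h : ∀ i, d i ≤ β) (w : n → ℝ) : w ⬝ᵥ diagonal d *ᵥ w ≤ β * (w ⬝ᵥ w) := by
  simp only [dotProduct, mulVec_diagonal, Finset.mul_sum]
  exact Finset.sum_le_sum fun i _ => by nlinarith [h i, mul_self_nonneg (w i)]

theorem exists_ne_zero_forall_ne_mulVec_eq_zero {K : Type*} [Field K] {L : Type*} [Fintype L]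
    [DecidableEq L] (B : Matrix L n K) (hcard : Fintype.card L ≤ Fintype.card n) (j : L) :
    ∃ b ≠ 0, ∀ k ≠ j, (B *ᵥ b) k = 0 := by
  let B' : Matrix {k // k ≠ j} n K := B.submatrix Subtype.val id
  have hlt : Module.finrank K ({k // k ≠ j} → K) < Module.finrank K (n → K) := by
    simp only [Module.finrank_fintype_fun_eq_card, Fintype.card_subtype_compl,
      Fintype.card_unique]
    have := Fintype.card_pos_iff.2 ⟨j⟩
    omega
  obtain ⟨b, hb, hb0⟩ := Submodule.ne_bot_iff _ |>.1 (LinearMap.ker_ne_bot_of_finrank_lt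
    (f := B'.mulVecLin) hlt)
  exact ⟨b, hb0, fun k hk => congrFun (hb : B' *ᵥ b = 0) ⟨k, hk⟩⟩

/-- The vectors `x` with `Fpᵀ x` supported at `j` form a subspace of codimension at most
`card n - 1`, on which the quadratic form is at least `dp j ‖x‖²`; by `hcard` it meets the range of
`Ep`, where the form is at most `β ‖x‖²`. -/
theorem le_of_dotProduct_mulVec_le_on_range {k : Type*} [Fintype k] [DecidableEq m]
    [DecidableEq l] [DecidableEq n] [DecidableEq k] (F : Matrix m l ℝ) (Fp : Matrix m n ℝ)
    (Ep : Matrix m k ℝ) (d : l → ℝ) (dp : n → ℝ) (j : n) (hsum : F * Fᵀ + Fp * Fpᵀ = 1)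
    (hEp : Epᵀ * Ep = 1)
    (hcard : Fintype.card n ≤ Fintype.card k) (hord : ∀ i, dp j ≤ d i) {β : ℝ}
    (hβ : ∀ b, (Ep *ᵥ b) ⬝ᵥ (F * diagonal d * Fᵀ + Fp * diagonal dp * Fpᵀ) *ᵥ (Ep *ᵥ b) ≤
      β * (b ⬝ᵥ b)) :
    dp j ≤ β := by
  obtain ⟨b, hb0, hb⟩ := exists_ne_zero_forall_ne_mulVec_eq_zero (Fpᵀ * Ep) hcard j
  set x := Ep *ᵥ b
  have hxx : x ⬝ᵥ x = b ⬝ᵥ b := mulVec_dotProduct_mulVec_of_transpose_mul_self_eq_one hEp b b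
  have hsplit : x ⬝ᵥ x = (Fᵀ *ᵥ x) ⬝ᵥ (Fᵀ *ᵥ x) + (Fpᵀ *ᵥ x) ⬝ᵥ (Fpᵀ *ᵥ x) := by
    calc x ⬝ᵥ x = x ⬝ᵥ (F * (1 : Matrix l l ℝ) * Fᵀ + Fp * (1 : Matrix n n ℝ) * Fpᵀ) *ᵥ x := by
          rw [Matrix.mul_one, Matrix.mul_one, hsum, one_mulVec]
      _ = _ := by
          rw [add_mulVec, dotProduct_add, dotProduct_mul_mul_transpose_mulVec,
            dotProduct_mul_mul_transpose_mulVec, one_mulVec, one_mulVec]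
  have hlower : dp j * (x ⬝ᵥ x) ≤
      x ⬝ᵥ (F * diagonal d * Fᵀ + Fp * diagonal dp * Fpᵀ) *ᵥ x := by
    rw [add_mulVec, dotProduct_add, dotProduct_mul_mul_transpose_mulVec,
      dotProduct_mul_mul_transpose_mulVec, hsplit, mul_add]
    gcongr
    · exact le_dotProduct_diagonal_mulVec fun i _ => hord i
    · refine le_dotProduct_diagonal_mulVec fun i hi => ?_
      by_cases hij : i = j
      · rw [hij]
      · exact absurd (by simpa [x, mulVec_mulVec] using hb i hij) hi
  have hpos : 0 < b ⬝ᵥ b := by simpa using dotProduct_star_self_pos_iff.2 hb0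
  rw [hxx] at hlower
  exact le_of_mul_le_mul_right (hlower.trans (hβ b)) hpos

theorem norm_toLp_sq (x : n → ℝ) : ‖toLp 2 x‖ ^ 2 = x ⬝ᵥ x := by
  rw [← real_inner_self_eq_norm_sq, EuclideanSpace.inner_toLp_toLp, star_trivial]

section L2OpNorm

open scoped Matrix.Norms.L2Operator

variable [DecidableEq n]

theorem l2_opNorm_transpose [DecidableEq m] (A : Matrix m n ℝ) : ‖Aᵀ‖ = ‖A‖ := by
  rw [← conjTranspose_eq_transpose_of_trivial, l2_opNorm_conjTranspose]

theorem l2_opNorm_one_le : ‖(1 : Matrix n n ℝ)‖ ≤ 1 := by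
  rw [← diagonal_one, l2_opNorm_diagonal]
  exact (pi_norm_le_iff_of_nonneg zero_le_one).2 fun _ => by simp

theorem l2_opNorm_mul_of_transpose_mul_self_eq_one [DecidableEq l] {U : Matrix m n ℝ}
    (hU : Uᵀ * U = 1) (B : Matrix n l ℝ) : ‖U * B‖ = ‖B‖ := by
  have h : ‖U * B‖ * ‖U * B‖ = ‖B‖ * ‖B‖ := by
    simp only [← l2_opNorm_conjTranspose_mul_self, conjTranspose_eq_transpose_of_trivial,
      transpose_mul, Matrix.mul_assoc, ← Matrix.mul_assoc Uᵀ, hU, Matrix.one_mul]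
  exact mul_self_inj (norm_nonneg _) (norm_nonneg _) |>.1 h

theorem l2_opNorm_le_one_of_transpose_mul_self_eq_one {U : Matrix m n ℝ} (hU : Uᵀ * U = 1) :
    ‖U‖ ≤ 1 := by
  calc ‖U‖ = ‖U * 1‖ := by rw [Matrix.mul_one]
    _ = ‖(1 : Matrix n n ℝ)‖ := l2_opNorm_mul_of_transpose_mul_self_eq_one hU 1
    _ ≤ 1 := l2_opNorm_one_le

theorem l2_opNorm_transpose_mul_mul_le {p : Type*} [Fintype p] [DecidableEq p] [DecidableEq m]
    [DecidableEq l] {U : Matrix m n ℝ} {V : Matrix l p ℝ} (hU : Uᵀ * U = 1) (hV : Vᵀ * V = 1)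
    (X : Matrix m l ℝ) :
    ‖Uᵀ * X * V‖ ≤ ‖X‖ :=
  calc ‖Uᵀ * X * V‖ ≤ ‖Uᵀ‖ * ‖X‖ * ‖V‖ := (l2_opNorm_mul _ _).trans <|
        mul_le_mul_of_nonneg_right (l2_opNorm_mul _ _) (norm_nonneg _)
    _ ≤ 1 * ‖X‖ * 1 := by
        gcongr
        · rw [l2_opNorm_transpose]; exact l2_opNorm_le_one_of_transpose_mul_self_eq_one hU
        · exact l2_opNorm_le_one_of_transpose_mul_self_eq_one hV
    _ = ‖X‖ := by ring

theorem dotProduct_mulVec_le (A : Matrix m n ℝ) (u : m → ℝ) (v : n → ℝ) :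
    u ⬝ᵥ A *ᵥ v ≤ ‖A‖ * ‖toLp 2 u‖ * ‖toLp 2 v‖ :=
  calc u ⬝ᵥ A *ᵥ v = inner ℝ (toLp 2 u) (toLp 2 (A *ᵥ v)) := by
        rw [EuclideanSpace.inner_toLp_toLp, star_trivial, dotProduct_comm]
    _ ≤ ‖toLp 2 u‖ * ‖toLp 2 (A *ᵥ v)‖ := real_inner_le_norm _ _
    _ ≤ ‖toLp 2 u‖ * (‖A‖ * ‖toLp 2 v‖) := by gcongr; exact l2_opNorm_mulVec A (toLp 2 v)
    _ = ‖A‖ * ‖toLp 2 u‖ * ‖toLp 2 v‖ := by ring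

theorem dotProduct_mulVec_self_le (A : Matrix n n ℝ) (x : n → ℝ) :
    x ⬝ᵥ A *ᵥ x ≤ ‖A‖ * (x ⬝ᵥ x) := by
  simpa only [mul_assoc, ← sq, norm_toLp_sq] using dotProduct_mulVec_le A x x

theorem mulVec_dotProduct_add_mulVec_le_of_mul_eq_mul [DecidableEq m] {A H : Matrix m m ℝ}
    {A' : Matrix n n ℝ} {U : Matrix m n ℝ} (hU : Uᵀ * U = 1) (hAU : A * U = U * A') (b : n → ℝ) :
    (U *ᵥ b) ⬝ᵥ (A + H) *ᵥ (U *ᵥ b) ≤ (‖A'‖ + ‖H‖) * (b ⬝ᵥ b) := by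
  rw [add_mulVec, dotProduct_add, mulVec_mulVec, hAU, ← mulVec_mulVec,
    mulVec_dotProduct_mulVec_of_transpose_mul_self_eq_one hU, add_mul]
  gcongr
  · exact dotProduct_mulVec_self_le A' b
  · simpa only [mulVec_dotProduct_mulVec_of_transpose_mul_self_eq_one hU]
      using dotProduct_mulVec_self_le H (U *ᵥ b)

theorem exists_transpose_mulVec_mulVec_eq [DecidableEq m] [Nonempty n] (S : Matrix m n ℝ) :
    ∃ x : n → ℝ, x ⬝ᵥ x = 1 ∧ Sᵀ *ᵥ S *ᵥ x = ‖S‖ ^ 2 • x := by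
  obtain ⟨x, hx, hSx⟩ := (LinearMap.toContinuousLinearMap (toEuclideanLin S))
    |>.exists_norm_eq_one_adjoint_comp_self_apply_eq
  refine ⟨ofLp x, by rw [← norm_toLp_sq, toLp_ofLp, hx, one_pow], ?_⟩
  rw [← LinearMap.adjoint_toContinuousLinearMap, ← toEuclideanLin_conjTranspose_eq_adjoint,
    conjTranspose_eq_transpose_of_trivial] at hSx
  exact congrArg ofLp hSx

theorem sub_mul_l2_opNorm_le_l2_opNorm_mul_sub_mul [DecidableEq m] (S : Matrix m n ℝ)
    (A : Matrix n n ℝ) (D : Matrix m m ℝ) {α β : ℝ}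
    (hA : ∀ v, v ⬝ᵥ v = 1 → α ≤ v ⬝ᵥ A *ᵥ v) (hD : ∀ w, w ⬝ᵥ D *ᵥ w ≤ β * (w ⬝ᵥ w)) :
    (α - β) * ‖S‖ ≤ ‖S * A - D * S‖ := by
  cases isEmpty_or_nonempty n
  · simp [Subsingleton.elim S 0]
  obtain ⟨x, hx, hSx⟩ := exists_transpose_mulVec_mulVec_eq S
  have hSxSx : (S *ᵥ x) ⬝ᵥ (S *ᵥ x) = ‖S‖ ^ 2 := by
    rw [mulVec_dotProduct_mulVec, hSx, dotProduct_smul, hx, smul_eq_mul, mul_one]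
  -- test the residual against the top singular pair `(S x, x)`
  have hlower : ‖S‖ ^ 2 * (α - β) ≤ (S *ᵥ x) ⬝ᵥ (S * A - D * S) *ᵥ x := by
    have hSAx : (S *ᵥ x) ⬝ᵥ (S * A) *ᵥ x = ‖S‖ ^ 2 * (x ⬝ᵥ A *ᵥ x) := by
      rw [← mulVec_mulVec, dotProduct_comm, mulVec_dotProduct_mulVec, hSx, dotProduct_smul,
        dotProduct_comm, smul_eq_mul]
    have hDSx := hD (S *ᵥ x)
    rw [hSxSx] at hDSx
    rw [sub_mulVec, dotProduct_sub, hSAx, ← mulVec_mulVec]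
    nlinarith [mul_le_mul_of_nonneg_left (hA x hx) (sq_nonneg ‖S‖)]
  have hupper : (S *ᵥ x) ⬝ᵥ (S * A - D * S) *ᵥ x ≤ ‖S * A - D * S‖ * ‖S‖ := by
    have hnx : ‖toLp 2 x‖ = 1 := by
      rw [← sq_eq_sq₀ (norm_nonneg _) zero_le_one, one_pow, norm_toLp_sq, hx]
    have hnSx : ‖toLp 2 (S *ᵥ x)‖ = ‖S‖ := by
      rw [← sq_eq_sq₀ (norm_nonneg _) (norm_nonneg _), norm_toLp_sq, hSxSx]
    simpa [hnx, hnSx, mul_comm] using dotProduct_mulVec_le (S * A - D * S) (S *ᵥ x) x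
  rcases (norm_nonneg S).eq_or_lt with hS | hS
  · rw [← hS, mul_zero]; exact norm_nonneg _
  · nlinarith

end L2OpNorm

end Matrix

section

open scoped Matrix.Norms.L2Operator

theorem specNorm_eq_l2_opNorm {m n : Type*} [Fintype m] [Fintype n] [DecidableEq n]
    (A : Matrix m n ℝ) : specNorm A = ‖A‖ := rfl

theorem lambdaMin_le_dotProduct_mulVec {n : Type*} [Fintype n] (A : Matrix n n ℝ) {v : n → ℝ}
    (hv : v ⬝ᵥ v = 1) :
    lambdaMin A ≤ v ⬝ᵥ A *ᵥ v := by
  classical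
  have hsq : ∀ x : n → ℝ, ∑ i, x i ^ 2 = x ⬝ᵥ x := fun x => by simp [dotProduct, sq]
  refine ciInf_le ⟨-‖A‖, ?_⟩ (⟨v, (hsq v).trans hv⟩ : {x : n → ℝ // ∑ i, x i ^ 2 = 1})
  rintro _ ⟨⟨x, hx⟩, rfl⟩
  have := dotProduct_mulVec_self_le (-A) x
  rw [hsq] at hx
  rw [norm_neg, neg_mulVec, dotProduct_neg, hx, mul_one] at this
  exact neg_le_of_neg_le this

end

theorem stmt11_general {n c : ℕ}
    (E : Matrix (Fin n) (Fin c) ℝ) (Eperp : Matrix (Fin n) (Fin (n - c)) ℝ)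
    (hE1 : (Matrix.fromCols E Eperp)ᵀ * Matrix.fromCols E Eperp = 1)
    (A1 : Matrix (Fin c) (Fin c) ℝ) (A2 : Matrix (Fin (n - c)) (Fin (n - c)) ℝ)
    (A H : Matrix (Fin n) (Fin n) ℝ)
    (hA : A = E * A1 * Eᵀ + Eperp * A2 * Eperpᵀ)
    (F : Matrix (Fin n) (Fin c) ℝ) (Fperp : Matrix (Fin n) (Fin (n - c)) ℝ)
    (hF1 : (Matrix.fromCols F Fperp)ᵀ * Matrix.fromCols F Fperp = 1)
    (hF2 : Matrix.fromCols F Fperp * (Matrix.fromCols F Fperp)ᵀ = 1)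
    (d : Fin c → ℝ) (dperp : Fin (n - c) → ℝ)
    (hord : ∀ i j, dperp j ≤ d i)
    (hdecomp : A + H =
      F * Matrix.diagonal d * Fᵀ + Fperp * Matrix.diagonal dperp * Fperpᵀ)
    (hpos : 0 < lambdaMin A1 - specNorm A2 - specNorm H) :
    specNorm ((1 - F * Fᵀ) * E) ≤
      specNorm H / (lambdaMin A1 - specNorm A2 - specNorm H) := by
  obtain ⟨hEE, hEEp, hEpE, hEpEp⟩ := transpose_fromCols_mul_fromCols_eq_one_iff.1 hE1
  obtain ⟨-, -, hFpF, hFpFp⟩ := transpose_fromCols_mul_fromCols_eq_one_iff.1 hF1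
  have hFsum : F * Fᵀ + Fperp * Fperpᵀ = 1 := by
    rw [← hF2, transpose_fromCols, fromCols_mul_fromRows]
  have hAE : A * E = E * A1 := by
    simp [hA, Matrix.add_mul, Matrix.mul_assoc, hEE, hEpE]
  have hAEp : A * Eperp = Eperp * A2 := by
    simp [hA, Matrix.add_mul, Matrix.mul_assoc, hEEp, hEpEp]
  have hFpAH : Fperpᵀ * (A + H) = diagonal dperp * Fperpᵀ := by
    simp [hdecomp, Matrix.mul_add, ← Matrix.mul_assoc, hFpF, hFpFp]
  have hweyl : ∀ j, dperp j ≤ specNorm A2 + specNorm H := fun j =>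
    le_of_dotProduct_mulVec_le_on_range F Fperp Eperp d dperp j hFsum hEpEp le_rfl
      (fun i => hord i j) fun b => by
        rw [← hdecomp]
        exact mulVec_dotProduct_add_mulVec_le_of_mul_eq_mul hEpEp hAEp b
  have hsyl : Fperpᵀ * E * A1 - diagonal dperp * (Fperpᵀ * E) = -(Fperpᵀ * H * E) := by
    rw [Matrix.mul_assoc, ← hAE, ← Matrix.mul_assoc (diagonal dperp), ← hFpAH, Matrix.mul_add,
      Matrix.add_mul, Matrix.mul_assoc, Matrix.mul_assoc]
    abel
  have hbound := sub_mul_l2_opNorm_le_l2_opNorm_mul_sub_mul (Fperpᵀ * E) A1 (diagonal dperp)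
    (fun v hv => lambdaMin_le_dotProduct_mulVec A1 hv) (dotProduct_diagonal_mulVec_le hweyl)
  open scoped Matrix.Norms.L2Operator in rw [hsyl, norm_neg] at hbound
  have hproj : (1 - F * Fᵀ) * E = Fperp * (Fperpᵀ * E) := by
    rw [← hFsum, add_sub_cancel_left, Matrix.mul_assoc]
  rw [le_div_iff₀ hpos, hproj, specNorm_eq_l2_opNorm,
    l2_opNorm_mul_of_transpose_mul_self_eq_one hFpFp, mul_comm, sub_sub]
  exact hbound.trans (l2_opNorm_transpose_mul_mul_le hFpFp hEE H)

/-- Davis–Kahan sin θ theorem combined with Weyl's inequality: the top-`c`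
eigenvectors `F` of the perturbed matrix `A + H` satisfy
`‖(I − FFᵀ)E‖₂ ≤ ‖H‖₂ / (λ_min(A₁) − ‖A₂‖₂ − ‖H‖₂)`. -/
theorem stmt11 {n c : ℕ} (hc : 0 < c) (hcn : c < n)
    (E : Matrix (Fin n) (Fin c) ℝ) (Eperp : Matrix (Fin n) (Fin (n - c)) ℝ)
    (hE1 : (Matrix.fromCols E Eperp)ᵀ * Matrix.fromCols E Eperp = 1)
    (hE2 : Matrix.fromCols E Eperp * (Matrix.fromCols E Eperp)ᵀ = 1)
    (A1 : Matrix (Fin c) (Fin c) ℝ) (A2 : Matrix (Fin (n - c)) (Fin (n - c)) ℝ)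
    (hA1 : A1ᵀ = A1) (hA2 : A2ᵀ = A2)
    (A H : Matrix (Fin n) (Fin n) ℝ)
    (hA : A = E * A1 * Eᵀ + Eperp * A2 * Eperpᵀ)
    (hH : Hᵀ = H)
    (F : Matrix (Fin n) (Fin c) ℝ) (Fperp : Matrix (Fin n) (Fin (n - c)) ℝ)
    (hF1 : (Matrix.fromCols F Fperp)ᵀ * Matrix.fromCols F Fperp = 1)
    (hF2 : Matrix.fromCols F Fperp * (Matrix.fromCols F Fperp)ᵀ = 1)
    (d : Fin c → ℝ) (dperp : Fin (n - c) → ℝ)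
    (hord : ∀ i j, dperp j ≤ d i)
    (hdecomp : A + H =
      F * Matrix.diagonal d * Fᵀ + Fperp * Matrix.diagonal dperp * Fperpᵀ)
    (hpos : 0 < lambdaMin A1 - specNorm A2 - specNorm H) :
    specNorm ((1 - F * Fᵀ) * E) ≤
      specNorm H / (lambdaMin A1 - specNorm A2 - specNorm H) :=
  stmt11_general E Eperp hE1 A1 A2 A H hA F Fperp hF1 hF2 d dperp hord hdecomp hpos
end

section
/- Let P and P̂ be n×r real basis matrices and Q an n×c real basis matrix with Qᵀ P = 0, and suppose ‖(I − P̂ P̂ᵀ) P‖₂ ≤ ζ. Then for every subset T of {1,…,n} with |T| ≤ s, ‖I_Tᵀ (I − P̂ P̂ᵀ) Q‖₂ ≤ κ_s(Q) + ζ. -/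
open Matrix

open scoped RealInnerProductSpace

/-- The continuous linear map of a matrix on Euclidean space. -/
noncomputable def eL {m n : Type*} [Fintype m] [Fintype n] [DecidableEq n]
    (A : Matrix m n ℝ) : EuclideanSpace ℝ n →L[ℝ] EuclideanSpace ℝ m :=
  LinearMap.toContinuousLinearMap (Matrix.toEuclideanLin A)

lemma le_of_sq_le_sq' {a b : ℝ} (h : a ^ 2 ≤ b ^ 2) (hb : 0 ≤ b) : a ≤ b := by
  nlinarith [sq_nonneg (a - b), sq_nonneg (a + b)]

lemma specNorm_eq_norm_eL {m n : Type*} [Fintype m] [Fintype n] [DecidableEq n]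
    (A : Matrix m n ℝ) : specNorm A = ‖eL A‖ := rfl

lemma eL_apply {m n : Type*} [Fintype m] [Fintype n] [DecidableEq n]
    (A : Matrix m n ℝ) (x : EuclideanSpace ℝ n) :
    eL A x = (WithLp.equiv 2 (m → ℝ)).symm (A *ᵥ (WithLp.equiv 2 (n → ℝ)) x) :=
  Matrix.toEuclideanLin_apply A x

lemma eL_mul {l m n : Type*} [Fintype l] [Fintype m] [Fintype n]
    [DecidableEq m] [DecidableEq n] (A : Matrix l m ℝ) (B : Matrix m n ℝ) :
    eL (A * B) = (eL A).comp (eL B) := by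
  ext x
  simp [eL_apply, Matrix.mulVec_mulVec]

lemma eL_one {n : Type*} [Fintype n] [DecidableEq n] :
    eL (1 : Matrix n n ℝ) = ContinuousLinearMap.id ℝ (EuclideanSpace ℝ n) := by
  ext x
  simp [eL_apply]

lemma eL_sub {m n : Type*} [Fintype m] [Fintype n] [DecidableEq n]
    (A B : Matrix m n ℝ) : eL (A - B) = eL A - eL B := by
  ext x
  simp [eL, map_sub]

lemma inner_eL_transpose {m n : Type*} [Fintype m] [Fintype n] [DecidableEq m] [DecidableEq n]
    (A : Matrix m n ℝ) (y : EuclideanSpace ℝ m) (x : EuclideanSpace ℝ n) :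
    ⟪eL Aᵀ y, x⟫ = ⟪y, eL A x⟫ := by
  show ⟪Matrix.toEuclideanLin Aᵀ y, x⟫ = ⟪y, Matrix.toEuclideanLin A x⟫
  rw [← Matrix.conjTranspose_eq_transpose_of_trivial,
    Matrix.toEuclideanLin_conjTranspose_eq_adjoint]
  exact LinearMap.adjoint_inner_left _ _ _

lemma norm_eL_of_orthonormal {m n : Type*} [Fintype m] [Fintype n] [DecidableEq m] [DecidableEq n]
    {B : Matrix m n ℝ} (hB : Bᵀ * B = 1) (x : EuclideanSpace ℝ n) :
    ‖eL B x‖ = ‖x‖ := by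
  have h : ⟪eL B x, eL B x⟫ = ⟪x, x⟫ := by
    rw [← inner_eL_transpose, ← ContinuousLinearMap.comp_apply, ← eL_mul, hB, eL_one]
    rfl
  rw [real_inner_self_eq_norm_sq, real_inner_self_eq_norm_sq] at h
  nlinarith [norm_nonneg (eL B x), norm_nonneg x]

lemma specNorm_le_one_of_orthonormal {m n : Type*} [Fintype m] [Fintype n]
    [DecidableEq m] [DecidableEq n] {B : Matrix m n ℝ} (hB : Bᵀ * B = 1) :
    specNorm B ≤ 1 := by
  rw [specNorm_eq_norm_eL]
  exact ContinuousLinearMap.opNorm_le_bound _ zero_le_one fun x => by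
    rw [norm_eL_of_orthonormal hB, one_mul]

lemma specNorm_transpose_le {m n : Type*} [Fintype m] [Fintype n] [DecidableEq m] [DecidableEq n]
    (A : Matrix m n ℝ) : specNorm Aᵀ ≤ specNorm A := by
  rw [specNorm_eq_norm_eL, specNorm_eq_norm_eL]
  apply ContinuousLinearMap.opNorm_le_bound _ (norm_nonneg _) fun y => ?_
  have hsq : ‖eL Aᵀ y‖ ^ 2 ≤ ‖eL A‖ * ‖y‖ * ‖eL Aᵀ y‖ := by
    calc ‖eL Aᵀ y‖ ^ 2 = ⟪eL Aᵀ y, eL Aᵀ y⟫ := (real_inner_self_eq_norm_sq _).symm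
      _ = ⟪y, eL A (eL Aᵀ y)⟫ := inner_eL_transpose _ _ _
      _ ≤ ‖y‖ * ‖eL A (eL Aᵀ y)‖ := real_inner_le_norm _ _
      _ ≤ ‖y‖ * (‖eL A‖ * ‖eL Aᵀ y‖) := by
          gcongr; exact ContinuousLinearMap.le_opNorm _ _
      _ = ‖eL A‖ * ‖y‖ * ‖eL Aᵀ y‖ := by ring
  rcases eq_or_lt_of_le (norm_nonneg (eL Aᵀ y)) with h | h
  · rw [← h]; positivity
  · nlinarith

lemma specNorm_transpose_s12 {m n : Type*} [Fintype m] [Fintype n] [DecidableEq m] [DecidableEq n]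
    (A : Matrix m n ℝ) : specNorm Aᵀ = specNorm A := by
  refine le_antisymm (specNorm_transpose_le A) ?_
  have := specNorm_transpose_le Aᵀ
  rwa [Matrix.transpose_transpose] at this

lemma pyth_of_orthonormal {m n : Type*} [Fintype m] [Fintype n] [DecidableEq m] [DecidableEq n]
    {B : Matrix m n ℝ} (hB : Bᵀ * B = 1) (u : EuclideanSpace ℝ m) :
    ‖u - eL B (eL Bᵀ u)‖ ^ 2 = ‖u‖ ^ 2 - ‖eL Bᵀ u‖ ^ 2 := by
  have h1 : ⟪u, eL B (eL Bᵀ u)⟫ = ‖eL Bᵀ u‖ ^ 2 := by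
    rw [← inner_eL_transpose]; exact real_inner_self_eq_norm_sq _
  have h2 : ‖eL B (eL Bᵀ u)‖ = ‖eL Bᵀ u‖ := norm_eL_of_orthonormal hB _
  rw [norm_sub_sq_real, h1, h2]; ring

lemma specNorm_mul_le {l m n : Type*} [Fintype l] [Fintype m] [Fintype n]
    [DecidableEq m] [DecidableEq n] (A : Matrix l m ℝ) (B : Matrix m n ℝ) :
    specNorm (A * B) ≤ specNorm A * specNorm B := by
  rw [specNorm_eq_norm_eL, specNorm_eq_norm_eL, specNorm_eq_norm_eL, eL_mul]
  exact ContinuousLinearMap.opNorm_comp_le _ _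

lemma specNorm_submatrix_le {n c : ℕ} (A : Matrix (Fin n) (Fin c) ℝ) (T : Finset (Fin n)) :
    specNorm (A.submatrix (fun i : {i // i ∈ T} => i.1) id) ≤ specNorm A := by
  rw [specNorm_eq_norm_eL]
  apply ContinuousLinearMap.opNorm_le_bound _ (by rw [specNorm_eq_norm_eL]; exact norm_nonneg _)
    fun x => ?_
  have key : ‖eL (A.submatrix (fun i : {i // i ∈ T} => i.1) id) x‖ ≤ ‖eL A x‖ := by
    rw [EuclideanSpace.norm_eq, EuclideanSpace.norm_eq]
    apply Real.sqrt_le_sqrt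
    have hco : ∀ i : {i // i ∈ T},
        (eL (A.submatrix (fun i : {i // i ∈ T} => i.1) id) x) i = (eL A x) i.1 := by
      intro i; rfl
    calc ∑ i : {i // i ∈ T}, ‖(eL (A.submatrix (fun i : {i // i ∈ T} => i.1) id) x) i‖ ^ 2
        = ∑ i ∈ T, ‖(eL A x) i‖ ^ 2 := by
          rw [← Finset.sum_coe_sort T (fun i => ‖(eL A x) i‖ ^ 2)]
          exact Finset.sum_congr rfl fun i _ => by rw [hco]
      _ ≤ ∑ i, ‖(eL A x) i‖ ^ 2 :=
          Finset.sum_le_sum_of_subset_of_nonneg (Finset.subset_univ T)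
            (fun _ _ _ => sq_nonneg _)
  calc ‖eL (A.submatrix (fun i : {i // i ∈ T} => i.1) id) x‖ ≤ ‖eL A x‖ := key
    _ ≤ ‖eL A‖ * ‖x‖ := ContinuousLinearMap.le_opNorm _ _
    _ = specNorm A * ‖x‖ := by rw [specNorm_eq_norm_eL]

lemma le_kappa {n c : ℕ} (s : ℕ) (Q : Matrix (Fin n) (Fin c) ℝ) (T : Finset (Fin n))
    (hT : T.card ≤ s) :
    specNorm (Q.submatrix (fun i : {i // i ∈ T} => i.1) id) ≤ kappa s Q := by
  have h := le_ciSup (f := fun T : {T : Finset (Fin n) // T.card ≤ s} =>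
      specNorm (Q.submatrix (fun i : {i // i ∈ T.1} => i.1) id))
    (Set.Finite.bddAbove (Set.finite_range _)) ⟨T, hT⟩
  simpa [kappa] using h

set_option maxHeartbeats 4000000 in
/-- For basis matrices `P, P̂` (n×r) and `Q` (n×c) with `QᵀP = 0` and
`‖(I − P̂P̂ᵀ)P‖₂ ≤ ζ`: for every `T` with `|T| ≤ s`,
`‖I_Tᵀ (I − P̂P̂ᵀ) Q‖₂ ≤ κ_s(Q) + ζ`. -/
theorem stmt12 {n r c : ℕ} (s : ℕ)
    (P Phat : Matrix (Fin n) (Fin r) ℝ) (Q : Matrix (Fin n) (Fin c) ℝ)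
    (hP : Pᵀ * P = 1) (hPhat : Phatᵀ * Phat = 1) (hQ : Qᵀ * Q = 1)
    (horth : Qᵀ * P = 0)
    (ζ : ℝ) (hζ : specNorm ((1 - Phat * Phatᵀ) * P) ≤ ζ)
    (T : Finset (Fin n)) (hT : T.card ≤ s) :
    specNorm (((1 - Phat * Phatᵀ) * Q).submatrix (fun i : {i // i ∈ T} => i.1) id) ≤
      kappa s Q + ζ := by
  have hζ0 : 0 ≤ ζ := le_trans (by rw [specNorm_eq_norm_eL]; exact norm_nonneg _) hζ
  -- key inequality : ‖Qᵀ P̂‖ ≤ ζ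
  have key : specNorm (Qᵀ * Phat) ≤ ζ := by
    by_cases hcase : 1 ≤ ζ
    · calc specNorm (Qᵀ * Phat) ≤ specNorm Qᵀ * specNorm Phat := specNorm_mul_le _ _
        _ ≤ 1 * 1 := by
            refine mul_le_mul ?_ (specNorm_le_one_of_orthonormal hPhat) ?_ zero_le_one
            · rw [specNorm_transpose_s12]; exact specNorm_le_one_of_orthonormal hQ
            · rw [specNorm_eq_norm_eL]; exact norm_nonneg _
        _ ≤ ζ := by linarith
    · push_neg at hcase
      set ε : ℝ := Real.sqrt (1 - ζ ^ 2) with hε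
      have hε0 : 0 < ε := Real.sqrt_pos.mpr (by nlinarith)
      have hε2 : ε ^ 2 = 1 - ζ ^ 2 := Real.sq_sqrt (by nlinarith)
      set M : Matrix (Fin r) (Fin r) ℝ := Phatᵀ * P with hM
      -- Step 1 : ε ‖x‖ ≤ ‖M x‖
      have step1 : ∀ x : EuclideanSpace ℝ (Fin r), ε * ‖x‖ ≤ ‖eL M x‖ := by
        intro x
        have hu : ‖eL P x‖ = ‖x‖ := norm_eL_of_orthonormal hP x
        have hpy := pyth_of_orthonormal hPhat (eL P x)
        have hrw : eL P x - eL Phat (eL Phatᵀ (eL P x)) = eL ((1 - Phat * Phatᵀ) * P) x := by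
          rw [Matrix.sub_mul, Matrix.one_mul, eL_sub, Matrix.mul_assoc, eL_mul, eL_mul]
          rfl
        have hres : ‖eL ((1 - Phat * Phatᵀ) * P) x‖ ≤ ζ * ‖x‖ := by
          calc ‖eL ((1 - Phat * Phatᵀ) * P) x‖
              ≤ ‖eL ((1 - Phat * Phatᵀ) * P)‖ * ‖x‖ := ContinuousLinearMap.le_opNorm _ _
            _ ≤ ζ * ‖x‖ := by
                apply mul_le_mul_of_nonneg_right _ (norm_nonneg _)
                rw [← specNorm_eq_norm_eL]; exact hζ
        rw [hrw] at hpy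
        have hMx : eL M x = eL Phatᵀ (eL P x) := by
          rw [hM, eL_mul]; rfl
        have h1 : ‖eL M x‖ ^ 2 ≥ ε ^ 2 * ‖x‖ ^ 2 := by
          rw [hMx]
          nlinarith [hpy, hu, hres, norm_nonneg (eL ((1 - Phat * Phatᵀ) * P) x),
            norm_nonneg x]
        nlinarith [norm_nonneg (eL M x), norm_nonneg x, hε0]
      -- Step 2 : M is invertible
      have hMinj : Function.Injective (M.mulVec) := by
        intro a b hab
        have h := step1 ((WithLp.equiv 2 (Fin r → ℝ)).symm (a - b))
        have h0 : eL M ((WithLp.equiv 2 (Fin r → ℝ)).symm (a - b)) = 0 := by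
          rw [eL_apply]
          simp [Matrix.mulVec_sub, sub_eq_zero.mpr hab]
        rw [h0, norm_zero] at h
        have : ‖(WithLp.equiv 2 (Fin r → ℝ)).symm (a - b)‖ = 0 := by
          have := norm_nonneg ((WithLp.equiv 2 (Fin r → ℝ)).symm (a - b))
          nlinarith
        have h2 : (WithLp.equiv 2 (Fin r → ℝ)).symm (a - b) = 0 := norm_eq_zero.mp this
        have h3 : a - b = 0 := by
          have := congrArg (WithLp.equiv 2 (Fin r → ℝ)) h2
          simpa using this
        exact sub_eq_zero.mp h3
      have hdet : IsUnit M.det :=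
        (Matrix.isUnit_iff_isUnit_det M).mp (Matrix.mulVec_injective_iff_isUnit.mp hMinj)
      -- Step 3 : ‖M⁻¹‖ ≤ ε⁻¹
      have step3 : specNorm M⁻¹ ≤ ε⁻¹ := by
        rw [specNorm_eq_norm_eL]
        apply ContinuousLinearMap.opNorm_le_bound _ (by positivity) fun z => ?_
        have h := step1 (eL M⁻¹ z)
        have he : eL M (eL M⁻¹ z) = z := by
          rw [← ContinuousLinearMap.comp_apply, ← eL_mul, Matrix.mul_nonsing_inv _ hdet,
            eL_one]
          rfl
        rw [he] at h
        calc ‖eL M⁻¹ z‖ = ε⁻¹ * (ε * ‖eL M⁻¹ z‖) := by field_simp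
          _ ≤ ε⁻¹ * ‖z‖ := mul_le_mul_of_nonneg_left h (by positivity)
      -- Step 4 : ε ‖y‖ ≤ ‖Mᵀ y‖
      have step4 : ∀ y : EuclideanSpace ℝ (Fin r), ε * ‖y‖ ≤ ‖eL Mᵀ y‖ := by
        intro y
        have hid : ((M⁻¹)ᵀ * Mᵀ) = 1 := by
          rw [← Matrix.transpose_mul, Matrix.mul_nonsing_inv _ hdet, Matrix.transpose_one]
        have h1 : ‖y‖ ≤ ε⁻¹ * ‖eL Mᵀ y‖ := by
          calc ‖y‖ = ‖eL ((M⁻¹)ᵀ * Mᵀ) y‖ := by rw [hid, eL_one]; rfl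
            _ = ‖eL (M⁻¹)ᵀ (eL Mᵀ y)‖ := by rw [eL_mul]; rfl
            _ ≤ ‖eL (M⁻¹)ᵀ‖ * ‖eL Mᵀ y‖ := ContinuousLinearMap.le_opNorm _ _
            _ ≤ ε⁻¹ * ‖eL Mᵀ y‖ := by
                apply mul_le_mul_of_nonneg_right _ (norm_nonneg _)
                calc ‖eL (M⁻¹)ᵀ‖ = specNorm (M⁻¹)ᵀ := by rw [specNorm_eq_norm_eL]
                  _ = specNorm M⁻¹ := specNorm_transpose_s12 _
                  _ ≤ ε⁻¹ := step3
        calc ε * ‖y‖ ≤ ε * (ε⁻¹ * ‖eL Mᵀ y‖) := mul_le_mul_of_nonneg_left h1 hε0.le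
          _ = ‖eL Mᵀ y‖ := by field_simp
      -- Step 5 : conclude ‖Qᵀ P̂ y‖ ≤ ζ ‖y‖
      rw [specNorm_eq_norm_eL]
      apply ContinuousLinearMap.opNorm_le_bound _ hζ0 fun y => ?_
      have hv : ‖eL Phat y‖ = ‖y‖ := norm_eL_of_orthonormal hPhat y
      have hpy := pyth_of_orthonormal hP (eL Phat y)
      have hMt : eL Pᵀ (eL Phat y) = eL Mᵀ y := by
        rw [hM, Matrix.transpose_mul, Matrix.transpose_transpose, eL_mul]; rfl
      rw [hMt] at hpy
      have hbound : ‖eL Phat y - eL P (eL Mᵀ y)‖ ^ 2 ≤ ζ ^ 2 * ‖y‖ ^ 2 := by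
        have h4 := step4 y
        have h5 : ε ^ 2 * ‖y‖ ^ 2 ≤ ‖eL Mᵀ y‖ ^ 2 := by
          have h6 : (ε * ‖y‖) ^ 2 ≤ ‖eL Mᵀ y‖ ^ 2 :=
            pow_le_pow_left₀ (by positivity) h4 2
          calc ε ^ 2 * ‖y‖ ^ 2 = (ε * ‖y‖) ^ 2 := by ring
            _ ≤ ‖eL Mᵀ y‖ ^ 2 := h6
        rw [hε2] at h5
        rw [hv] at hpy
        nlinarith [hpy, h5]
      have hQP : eL (Qᵀ * Phat) y = eL Qᵀ (eL Phat y - eL P (eL Mᵀ y)) := by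
        rw [map_sub]
        have : eL Qᵀ (eL P (eL Mᵀ y)) = 0 := by
          rw [← ContinuousLinearMap.comp_apply, ← eL_mul, horth]
          show Matrix.toEuclideanLin (0 : Matrix (Fin c) (Fin r) ℝ) _ = 0
          rw [map_zero]; rfl
        rw [this, sub_zero, eL_mul]; rfl
      have hQle : specNorm Qᵀ ≤ 1 := by
        rw [specNorm_transpose_s12]; exact specNorm_le_one_of_orthonormal hQ
      calc ‖eL (Qᵀ * Phat) y‖ = ‖eL Qᵀ (eL Phat y - eL P (eL Mᵀ y))‖ := by rw [hQP]
        _ ≤ ‖eL Qᵀ‖ * ‖eL Phat y - eL P (eL Mᵀ y)‖ := ContinuousLinearMap.le_opNorm _ _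
        _ ≤ 1 * ‖eL Phat y - eL P (eL Mᵀ y)‖ := by
            apply mul_le_mul_of_nonneg_right _ (norm_nonneg _)
            rw [← specNorm_eq_norm_eL]; exact hQle
        _ = ‖eL Phat y - eL P (eL Mᵀ y)‖ := one_mul _
        _ ≤ ζ * ‖y‖ := by
            refine le_of_sq_le_sq' ?_ (by positivity)
            calc ‖eL Phat y - eL P (eL Mᵀ y)‖ ^ 2 ≤ ζ ^ 2 * ‖y‖ ^ 2 := hbound
              _ = (ζ * ‖y‖) ^ 2 := by ring
  -- assemble
  have hsplit : ((1 - Phat * Phatᵀ) * Q).submatrix (fun i : {i // i ∈ T} => i.1) id =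
      Q.submatrix (fun i : {i // i ∈ T} => i.1) id -
      (Phat * (Phatᵀ * Q)).submatrix (fun i : {i // i ∈ T} => i.1) id := by
    rw [Matrix.sub_mul, Matrix.one_mul, Matrix.mul_assoc, Matrix.submatrix_sub]
    rfl
  have htri : specNorm (((1 - Phat * Phatᵀ) * Q).submatrix (fun i : {i // i ∈ T} => i.1) id) ≤
      specNorm (Q.submatrix (fun i : {i // i ∈ T} => i.1) id) +
      specNorm ((Phat * (Phatᵀ * Q)).submatrix (fun i : {i // i ∈ T} => i.1) id) := by
    rw [hsplit, specNorm_eq_norm_eL, specNorm_eq_norm_eL, specNorm_eq_norm_eL, eL_sub]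
    exact norm_sub_le _ _
  have h2 : specNorm ((Phat * (Phatᵀ * Q)).submatrix (fun i : {i // i ∈ T} => i.1) id) ≤ ζ := by
    calc specNorm ((Phat * (Phatᵀ * Q)).submatrix (fun i : {i // i ∈ T} => i.1) id)
        ≤ specNorm (Phat * (Phatᵀ * Q)) := specNorm_submatrix_le _ _
      _ ≤ specNorm Phat * specNorm (Phatᵀ * Q) := specNorm_mul_le _ _
      _ ≤ 1 * specNorm (Phatᵀ * Q) := by
          apply mul_le_mul_of_nonneg_right (specNorm_le_one_of_orthonormal hPhat)
          rw [specNorm_eq_norm_eL]; exact norm_nonneg _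
      _ = specNorm (Phatᵀ * Q) := one_mul _
      _ = specNorm ((Phatᵀ * Q)ᵀ) := (specNorm_transpose_s12 _).symm
      _ = specNorm (Qᵀ * Phat) := by rw [Matrix.transpose_mul, Matrix.transpose_transpose]
      _ ≤ ζ := key
  have h1 : specNorm (Q.submatrix (fun i : {i // i ∈ T} => i.1) id) ≤ kappa s Q :=
    le_kappa s Q T hT
  linarith
end
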